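/- Let (X,d) be a compact metric space, let φ_1, …, φ_n : X² → X be continuous maps each of which is an (a_1,a_2)-contraction with a_1, a_2 ≥ 0 and a_1 + a_2 < 1, and let q_1,…,q_n > 0 with Σ_j q_j = 1. Let B, B' ⊆ X be nonempty closed sets and ν, ν' Borel probability measures on X. Suppose A and A' are the attractors of the IIFS induced by B and B' (i.e. the unique nonempty closed sets with closure(∪_j φ_j(A × B)) = A and closure(∪_j φ_j(A' × B')) = A'), and μ, μ' are fixed points of the Markov operators of the IIFS with probabilities induced by ν and ν' respectively (i.e. ∫ f dμ = ∫∫ Σ_j q_j f(φ_j(x,b)) dν(b) dμ(x) for all continuous f, and similarly for μ', ν'). Then max(h(A, A'), d_MK(μ, μ')) ≤ max(a_1 + a_2, a_2/(1 − a_1)) · max(h(B, B'), d_MK(ν, ν')), and the constant max(a_1 + a_2, a_2/(1 − a_1)) is strictly less than 1. -/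

import Mathlib

open MeasureTheory Metric Bornology Filter

/-- The Monge-Kantorovich distance between two Borel measures: supremum of
`|∫ f dμ - ∫ f dν|` over all 1-Lipschitz functions `f : X → ℝ`. -/
noncomputable def dMK {X : Type*} [MetricSpace X] [MeasurableSpace X]
    (μ ν : Measure X) : ℝ :=
  ⨆ f : {f : X → ℝ // LipschitzWith 1 f}, |∫ x, f.1 x ∂μ - ∫ x, f.1 x ∂ν|

section Aux

variable {X : Type*} [MetricSpace X] [CompactSpace X] [MeasurableSpace X] [BorelSpace X]

lemma cont_integrable (μ : Measure X) [IsProbabilityMeasure μ] {f : X → ℝ}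
    (hf : Continuous f) : Integrable f μ :=
  hf.integrable_of_hasCompactSupport (HasCompactSupport.of_compactSpace _)

lemma integral_sub_const_bound [Nonempty X] (μ : Measure X) [IsProbabilityMeasure μ]
    {f : X → ℝ} (hf : LipschitzWith 1 f) (x₀ : X) :
    |∫ x, f x ∂μ - f x₀| ≤ diam (Set.univ : Set X) := by
  have hi : Integrable f μ := cont_integrable μ hf.continuous
  have : ∫ x, f x ∂μ - f x₀ = ∫ x, (f x - f x₀) ∂μ := by
    rw [integral_sub hi (integrable_const _), integral_const]
    simp
  rw [this]
  have := MeasureTheory.norm_integral_le_of_norm_le_const (μ := μ)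
    (f := fun x => f x - f x₀) (C := diam (Set.univ : Set X)) ?_
  · simpa [measure_univ] using this
  · filter_upwards with x
    have h1 : dist (f x) (f x₀) ≤ 1 * dist x x₀ := hf.dist_le_mul x x₀
    have h2 : dist x x₀ ≤ diam (Set.univ : Set X) :=
      dist_le_diam_of_mem isCompact_univ.isBounded (Set.mem_univ _) (Set.mem_univ _)
    rw [Real.norm_eq_abs, ← Real.dist_eq]
    linarith

lemma dMK_bdd [Nonempty X] (μ ν : Measure X) [IsProbabilityMeasure μ]
    [IsProbabilityMeasure ν] :
    BddAbove (Set.range fun f : {f : X → ℝ // LipschitzWith 1 f} =>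
      |∫ x, f.1 x ∂μ - ∫ x, f.1 x ∂ν|) := by
  obtain ⟨x₀⟩ := (inferInstance : Nonempty X)
  refine ⟨2 * diam (Set.univ : Set X), ?_⟩
  rintro _ ⟨f, rfl⟩
  have h1 := integral_sub_const_bound μ f.2 x₀
  have h2 := integral_sub_const_bound ν f.2 x₀
  have h3 := abs_sub_le (∫ x, f.1 x ∂μ) (f.1 x₀) (∫ x, f.1 x ∂ν)
  have h4 : |f.1 x₀ - ∫ x, f.1 x ∂ν| = |(∫ x, f.1 x ∂ν) - f.1 x₀| := abs_sub_comm _ _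
  linarith

lemma lip_zero : LipschitzWith 1 (fun _ : X => (0 : ℝ)) :=
  LipschitzWith.of_dist_le_mul fun x y => by simp [dist_nonneg]

lemma dMK_nonneg [Nonempty X] (μ ν : Measure X) [IsProbabilityMeasure μ]
    [IsProbabilityMeasure ν] : 0 ≤ dMK μ ν := by
  have h := le_ciSup (dMK_bdd μ ν) ⟨fun _ => (0 : ℝ), lip_zero⟩
  simp at h
  exact h

/-- If `g` is `L`-Lipschitz then `|∫ g dμ - ∫ g dν| ≤ L * dMK μ ν`. -/
lemma abs_integral_sub_le_lipschitz [Nonempty X] (μ ν : Measure X) [IsProbabilityMeasure μ]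
    [IsProbabilityMeasure ν] {g : X → ℝ} {L : ℝ} (hL : 0 ≤ L)
    (hg : ∀ x y, dist (g x) (g y) ≤ L * dist x y) :
    |∫ x, g x ∂μ - ∫ x, g x ∂ν| ≤ L * dMK μ ν := by
  rcases eq_or_lt_of_le hL with hL0 | hLpos
  · -- L = 0 : g is constant
    obtain ⟨x₀⟩ := (inferInstance : Nonempty X)
    have hconst : ∀ x, g x = g x₀ := by
      intro x
      have h0 := hg x x₀
      rw [← hL0, zero_mul] at h0
      exact dist_le_zero.mp h0
    have : (fun x => g x) = fun _ => g x₀ := funext hconst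
    rw [this]
    simp [integral_const, measure_univ, ← hL0]
  · -- L > 0 : g / L is 1-Lipschitz
    set h : X → ℝ := fun x => g x / L with hh
    have hlip : LipschitzWith 1 h := by
      apply LipschitzWith.of_dist_le_mul
      intro x y
      have h0 := hg x y
      rw [Real.dist_eq] at h0 ⊢
      rw [NNReal.coe_one, one_mul,
        div_sub_div_same, abs_div, abs_of_pos hLpos, div_le_iff₀ hLpos, mul_comm]
      exact h0
    have hle : |∫ x, h x ∂μ - ∫ x, h x ∂ν| ≤ dMK μ ν :=
      le_ciSup (dMK_bdd μ ν) ⟨h, hlip⟩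
    have hint : ∫ x, h x ∂μ = (∫ x, g x ∂μ) / L := integral_div L g
    have hint' : ∫ x, h x ∂ν = (∫ x, g x ∂ν) / L := integral_div L g
    rw [hint, hint', div_sub_div_same, abs_div, abs_of_pos hLpos,
      div_le_iff₀ hLpos] at hle
    calc |∫ x, g x ∂μ - ∫ x, g x ∂ν| ≤ dMK μ ν * L := hle
    _ = L * dMK μ ν := mul_comm _ _

end Aux

/-- Contractivity of the joint evaluation map for a GIFSp of order 2 with
`(a_1, a_2)`-contractions, `a_1 + a_2 < 1`, on a compact metric space.  If `A`, `A'` are the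
attractors of the IIFS induced by `B`, `B'` and `μ`, `μ'` are fixed points of the Markov
operators of the IIFSp induced by `ν`, `ν'`, then
`max(h(A, A'), d_MK(μ, μ')) ≤ max(a_1 + a_2, a_2/(1 - a_1)) · max(h(B, B'), d_MK(ν, ν'))`, and
the constant `max(a_1 + a_2, a_2/(1 - a_1))` is strictly less than 1. -/
theorem stmt17 {X : Type*} [MetricSpace X] [CompactSpace X] [MeasurableSpace X] [BorelSpace X]
    (n : ℕ) (hn : 1 ≤ n)
    (φ : Fin n → X × X → X) (hφc : ∀ j, Continuous (φ j))
    (a₁ a₂ : ℝ) (ha₁ : 0 ≤ a₁) (ha₂ : 0 ≤ a₂) (hsum : a₁ + a₂ < 1)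
    (hcontr : ∀ j (x x' y y' : X),
      dist (φ j (x, y)) (φ j (x', y')) ≤ a₁ * dist x x' + a₂ * dist y y')
    (q : Fin n → ℝ) (hq : ∀ j, 0 < q j) (hq1 : ∑ j, q j = 1)
    (B B' A A' : Set X)
    (hBne : B.Nonempty) (hBcl : IsClosed B)
    (hB'ne : B'.Nonempty) (hB'cl : IsClosed B')
    (hAne : A.Nonempty) (hAcl : IsClosed A)
    (hA'ne : A'.Nonempty) (hA'cl : IsClosed A')
    (hA : closure (⋃ j, φ j '' (A ×ˢ B)) = A)
    (hA' : closure (⋃ j, φ j '' (A' ×ˢ B')) = A')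
    (ν ν' μ μ' : Measure X)
    [IsProbabilityMeasure ν] [IsProbabilityMeasure ν']
    [IsProbabilityMeasure μ] [IsProbabilityMeasure μ']
    (hμ : ∀ f : X → ℝ, Continuous f →
      ∫ x, f x ∂μ = ∫ x, (∫ b, (∑ j, q j * f (φ j (x, b))) ∂ν) ∂μ)
    (hμ' : ∀ f : X → ℝ, Continuous f →
      ∫ x, f x ∂μ' = ∫ x, (∫ b, (∑ j, q j * f (φ j (x, b))) ∂ν') ∂μ') :
    max (hausdorffDist A A') (dMK μ μ') ≤
      max (a₁ + a₂) (a₂ / (1 - a₁)) * max (hausdorffDist B B') (dMK ν ν') ∧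
    max (a₁ + a₂) (a₂ / (1 - a₁)) < 1 := by
  have hXne : Nonempty X := ⟨hAne.choose⟩
  have ha₁1 : a₁ < 1 := by linarith
  have h1a₁ : (0:ℝ) < 1 - a₁ := by linarith
  -- the constant comparison: a₂/(1-a₁) ≤ a₁ + a₂
  have hcle : a₂ / (1 - a₁) ≤ a₁ + a₂ := by
    rw [div_le_iff₀ h1a₁]; nlinarith
  have hc1 : max (a₁ + a₂) (a₂ / (1 - a₁)) < 1 := by
    apply max_lt hsum
    rw [div_lt_one h1a₁]; linarith
  have hcmax : a₂ / (1 - a₁) ≤ max (a₁ + a₂) (a₂ / (1 - a₁)) := le_max_right _ _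
  have hdivnn : 0 ≤ a₂ / (1 - a₁) := div_nonneg ha₂ h1a₁.le
  -- boundedness facts
  have hbdd : ∀ s : Set X, IsBounded s := fun s =>
    isCompact_univ.isBounded.subset (Set.subset_univ s)
  -- Hausdorff distance part
  have hAA' : hausdorffDist A A' ≤ a₂ / (1 - a₁) * hausdorffDist B B' := by
    set hA2 := hausdorffDist A A' with hhA2
    set hB2 := hausdorffDist B B' with hhB2
    have hr0 : (0:ℝ) ≤ a₁ * hA2 + a₂ * hB2 :=
      add_nonneg (mul_nonneg ha₁ hausdorffDist_nonneg) (mul_nonneg ha₂ hausdorffDist_nonneg)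
    have hAA'netop : EMetric.hausdorffEdist A A' ≠ ⊤ :=
      hausdorffEdist_ne_top_of_nonempty_of_bounded hAne hA'ne (hbdd A) (hbdd A')
    have hBB'netop : EMetric.hausdorffEdist B B' ≠ ⊤ :=
      hausdorffEdist_ne_top_of_nonempty_of_bounded hBne hB'ne (hbdd B) (hbdd B')
    have key : hA2 ≤ a₁ * hA2 + a₂ * hB2 := by
      have hcl : hA2 = hausdorffDist (⋃ j, φ j '' (A ×ˢ B)) (⋃ j, φ j '' (A' ×ˢ B')) := by
        have : hausdorffDist (closure (⋃ j, φ j '' (A ×ˢ B)))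
            (closure (⋃ j, φ j '' (A' ×ˢ B'))) =
            hausdorffDist (⋃ j, φ j '' (A ×ˢ B)) (⋃ j, φ j '' (A' ×ˢ B')) := by
          unfold hausdorffDist
          rw [EMetric.hausdorffEdist_closure]
        rw [hhA2, ← this, hA, hA']
      rw [show a₁ * hA2 + a₂ * hB2 = a₁ * hA2 + a₂ * hB2 from rfl]
      refine le_trans (le_of_eq hcl) ?_
      apply hausdorffDist_le_of_mem_dist hr0
      · rintro x hx
        simp only [Set.mem_iUnion] at hx
        obtain ⟨j, ⟨⟨a, b⟩, ⟨haA, hbB⟩, rfl⟩⟩ := hx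
        obtain ⟨a', ha'A', ha'd⟩ := (hA'cl.isCompact).exists_infDist_eq_dist hA'ne a
        obtain ⟨b', hb'B', hb'd⟩ := (hB'cl.isCompact).exists_infDist_eq_dist hB'ne b
        refine ⟨φ j (a', b'), ?_, ?_⟩
        · exact Set.mem_iUnion.2 ⟨j, ⟨(a', b'), ⟨ha'A', hb'B'⟩, rfl⟩⟩
        · have h1 : dist a a' ≤ hA2 := ha'd ▸ infDist_le_hausdorffDist_of_mem haA hAA'netop
          have h2 : dist b b' ≤ hB2 := hb'd ▸ infDist_le_hausdorffDist_of_mem hbB hBB'netop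
          calc dist (φ j (a, b)) (φ j (a', b')) ≤ a₁ * dist a a' + a₂ * dist b b' :=
              hcontr j a a' b b'
          _ ≤ a₁ * hA2 + a₂ * hB2 := by
              gcongr <;> assumption
      · rintro x hx
        simp only [Set.mem_iUnion] at hx
        obtain ⟨j, ⟨⟨a, b⟩, ⟨haA, hbB⟩, rfl⟩⟩ := hx
        obtain ⟨a', ha'A, ha'd⟩ := (hAcl.isCompact).exists_infDist_eq_dist hAne a
        obtain ⟨b', hb'B, hb'd⟩ := (hBcl.isCompact).exists_infDist_eq_dist hBne b
        refine ⟨φ j (a', b'), ?_, ?_⟩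
        · exact Set.mem_iUnion.2 ⟨j, ⟨(a', b'), ⟨ha'A, hb'B⟩, rfl⟩⟩
        · have h1 : dist a a' ≤ hA2 := by
            rw [← ha'd]
            rw [hhA2, hausdorffDist_comm]
            exact infDist_le_hausdorffDist_of_mem haA (by rwa [EMetric.hausdorffEdist_comm])
          have h2 : dist b b' ≤ hB2 := by
            rw [← hb'd]
            rw [hhB2, hausdorffDist_comm]
            exact infDist_le_hausdorffDist_of_mem hbB (by rwa [EMetric.hausdorffEdist_comm])
          calc dist (φ j (a, b)) (φ j (a', b'))
              ≤ a₁ * dist a a' + a₂ * dist b b' := hcontr j a a' b b'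
          _ ≤ a₁ * hA2 + a₂ * hB2 := by gcongr <;> assumption
    rw [div_mul_eq_mul_div, le_div_iff₀ h1a₁]
    nlinarith
  -- Monge-Kantorovich part
  have hMK : dMK μ μ' ≤ a₂ / (1 - a₁) * dMK ν ν' := by
    have key : dMK μ μ' ≤ a₁ * dMK μ μ' + a₂ * dMK ν ν' := by
      have : Nonempty {f : X → ℝ // LipschitzWith 1 f} := ⟨⟨fun _ => 0, lip_zero⟩⟩
      apply ciSup_le
      rintro ⟨f, hf⟩
      simp only
      -- the averaged functions
      set F : X → ℝ := fun x => ∫ b, (∑ j, q j * f (φ j (x, b))) ∂ν with hF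
      set F' : X → ℝ := fun x => ∫ b, (∑ j, q j * f (φ j (x, b))) ∂ν' with hF'
      have hfc : Continuous f := hf.continuous
      have hgc : ∀ x : X, Continuous (fun b => ∑ j, q j * f (φ j (x, b))) := by
        intro x
        exact continuous_finset_sum _ fun j _ => continuous_const.mul
          (hfc.comp ((hφc j).comp (Continuous.prodMk_right x)))
      have hGc : ∀ j : Fin n, Continuous (fun p : X × X => f (φ j p)) := fun j =>
        hfc.comp (hφc j)
      -- pointwise 1-Lipschitz estimate for f
      have hfd : ∀ u v : X, |f u - f v| ≤ dist u v := by
        intro u v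
        have := hf.dist_le_mul u v
        rwa [Real.dist_eq, NNReal.coe_one, one_mul] at this
      -- the inner sum is a₂-Lipschitz in b (for fixed x) and a₁-Lipschitz in x (for fixed b)
      have hsum_est : ∀ (x x' b b' : X),
          |(∑ j, q j * f (φ j (x, b))) - ∑ j, q j * f (φ j (x', b'))| ≤
            a₁ * dist x x' + a₂ * dist b b' := by
        intro x x' b b'
        rw [← Finset.sum_sub_distrib]
        calc |∑ j, (q j * f (φ j (x, b)) - q j * f (φ j (x', b')))|
            ≤ ∑ j, |q j * f (φ j (x, b)) - q j * f (φ j (x', b'))| :=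
              Finset.abs_sum_le_sum_abs _ _
        _ ≤ ∑ j, q j * (a₁ * dist x x' + a₂ * dist b b') := by
            apply Finset.sum_le_sum
            intro j _
            rw [← mul_sub, abs_mul, abs_of_pos (hq j)]
            apply mul_le_mul_of_nonneg_left _ (hq j).le
            exact le_trans (hfd _ _) (hcontr j x x' b b')
        _ = a₁ * dist x x' + a₂ * dist b b' := by
            rw [← Finset.sum_mul, hq1, one_mul]
      -- F is a₁-Lipschitz
      have hFd : ∀ (G : X → ℝ) (ρ : Measure X) [IsProbabilityMeasure ρ]
          (hG : G = fun x => ∫ b, (∑ j, q j * f (φ j (x, b))) ∂ρ),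
          ∀ x x', dist (G x) (G x') ≤ a₁ * dist x x' := by
        intro G ρ _ hG x x'
        rw [hG, Real.dist_eq]
        have hi1 : Integrable (fun b => ∑ j, q j * f (φ j (x, b))) ρ :=
          cont_integrable ρ (hgc x)
        have hi2 : Integrable (fun b => ∑ j, q j * f (φ j (x', b))) ρ :=
          cont_integrable ρ (hgc x')
        rw [← integral_sub hi1 hi2]
        have := MeasureTheory.norm_integral_le_of_norm_le_const (μ := ρ)
          (f := fun b => (∑ j, q j * f (φ j (x, b))) - ∑ j, q j * f (φ j (x', b)))
          (C := a₁ * dist x x') ?_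
        · simpa [measure_univ] using this
        · filter_upwards with b
          rw [Real.norm_eq_abs]
          have := hsum_est x x' b b
          simpa using this
      have hFlip : ∀ x x', dist (F x) (F x') ≤ a₁ * dist x x' := hFd F ν hF
      have hF'lip : ∀ x x', dist (F' x) (F' x') ≤ a₁ * dist x x' := hFd F' ν' hF'
      have hFc : Continuous F := by
        have : LipschitzWith a₁.toNNReal F := by
          apply LipschitzWith.of_dist_le_mul
          intro x y
          rw [Real.coe_toNNReal a₁ ha₁]
          exact hFlip x y
        exact this.continuous
      have hF'c : Continuous F' := by
        have : LipschitzWith a₁.toNNReal F' := by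
          apply LipschitzWith.of_dist_le_mul
          intro x y
          rw [Real.coe_toNNReal a₁ ha₁]
          exact hF'lip x y
        exact this.continuous
      -- |F x - F' x| ≤ a₂ * dMK ν ν'
      have hFF' : ∀ x, |F x - F' x| ≤ a₂ * dMK ν ν' := by
        intro x
        apply abs_integral_sub_le_lipschitz ν ν' ha₂
        intro b b'
        rw [Real.dist_eq]
        have := hsum_est x x b b'
        simpa using this
      -- main computation
      rw [hμ f hfc, hμ' f hfc]
      have hiF : Integrable F μ' := cont_integrable μ' hFc
      have hiF' : Integrable F' μ' := cont_integrable μ' hF'c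
      have split : (∫ x, F x ∂μ) - ∫ x, F' x ∂μ' =
          ((∫ x, F x ∂μ) - ∫ x, F x ∂μ') + ∫ x, (F x - F' x) ∂μ' := by
        rw [integral_sub hiF hiF']; ring
      rw [split]
      have h1 : |(∫ x, F x ∂μ) - ∫ x, F x ∂μ'| ≤ a₁ * dMK μ μ' :=
        abs_integral_sub_le_lipschitz μ μ' ha₁ hFlip
      have h2 : |∫ x, (F x - F' x) ∂μ'| ≤ a₂ * dMK ν ν' := by
        have := MeasureTheory.norm_integral_le_of_norm_le_const (μ := μ')
          (f := fun x => F x - F' x) (C := a₂ * dMK ν ν') ?_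
        · simpa [measure_univ] using this
        · filter_upwards with x
          rw [Real.norm_eq_abs]
          exact hFF' x
      calc |((∫ x, F x ∂μ) - ∫ x, F x ∂μ') + ∫ x, (F x - F' x) ∂μ'|
          ≤ |(∫ x, F x ∂μ) - ∫ x, F x ∂μ'| + |∫ x, (F x - F' x) ∂μ'| := abs_add_le _ _
      _ ≤ a₁ * dMK μ μ' + a₂ * dMK ν ν' := add_le_add h1 h2
    rw [div_mul_eq_mul_div, le_div_iff₀ h1a₁]
    nlinarith
  -- combine
  refine ⟨?_, hc1⟩
  have hMmax : (0:ℝ) ≤ max (hausdorffDist B B') (dMK ν ν') :=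
    le_trans hausdorffDist_nonneg (le_max_left _ _)
  apply max_le
  · calc hausdorffDist A A' ≤ a₂ / (1 - a₁) * hausdorffDist B B' := hAA'
    _ ≤ a₂ / (1 - a₁) * max (hausdorffDist B B') (dMK ν ν') := by
        gcongr; exact le_max_left _ _
    _ ≤ max (a₁ + a₂) (a₂ / (1 - a₁)) * max (hausdorffDist B B') (dMK ν ν') := by
        gcongr
  · calc dMK μ μ' ≤ a₂ / (1 - a₁) * dMK ν ν' := hMK
    _ ≤ a₂ / (1 - a₁) * max (hausdorffDist B B') (dMK ν ν') := by
        gcongr; exact le_max_right _ _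
    _ ≤ max (a₁ + a₂) (a₂ / (1 - a₁)) * max (hausdorffDist B B') (dMK ν ν') := by
        gcongr
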